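/- Let B ∈ ℝ and define l : M₂(ℝ) → ℝ by l(v) := (1/2)((v¹₁)² + (v¹₂)² + (v²₁)² + (v²₂)²) + B(v¹₁v²₂ − v¹₂v²₁). Let p ∈ (⋀²ℝ⁴)* have coordinates (e, p¹₁, p¹₂, p²₁, p²₂, r) with (r − B)² ≠ 1. Then the function v ↦ p(z(v)) − l(v) on M₂(ℝ) has exactly one critical point v*, and its critical value is p(z(v*)) − l(v*) = e + [ (1/2)((p¹₁)² + (p¹₂)² + (p²₁)² + (p²₂)²) + (r − B)(p¹₁p²₂ − p¹₂p²₁) ] / (1 − (r − B)²). -/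
import Mathlib


open ExteriorAlgebra

set_option synthInstance.maxHeartbeats 1000000
set_option maxHeartbeats 1000000

/-- The wedge `v₁ ∧ ⋯ ∧ vₙ` of `n` vectors, as an element of the `n`-th exterior power. -/
noncomputable def wedge {Q : Type*} [AddCommGroup Q] [Module ℝ Q] (n : ℕ) (v : Fin n → Q) :
    ⋀[ℝ]^n Q :=
  ⟨ExteriorAlgebra.ιMulti ℝ n v, ExteriorAlgebra.ιMulti_range ℝ n ⟨v, rfl⟩⟩

/-- The element of the dual of `⋀[ℝ]^n Q` induced by an alternating `n`-form on `Q`. -/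
noncomputable def extDual {Q : Type*} [AddCommGroup Q] [Module ℝ Q] (n : ℕ)
    (φ : Q [⋀^Fin n]→ₗ[ℝ] ℝ) : Module.Dual ℝ (⋀[ℝ]^n Q) :=
  (ExteriorAlgebra.liftAlternating
      (Function.update (fun i => (0 : Q [⋀^Fin i]→ₗ[ℝ] ℝ)) n φ)).comp
    (⋀[ℝ]^n Q).subtype

/-- The basis covector `dξᵃ ∧ dξᵇ ∈ (⋀²ℝ⁴)*`, sending `w₀ ∧ w₁` to
`w₀ᵃ w₁ᵇ − w₁ᵃ w₀ᵇ`.  With the labels `(ξ⁰,ξ¹,ξ²,ξ³) = (x¹,x²,y¹,y²)`, `dd 0 1 = dx¹∧dx²`,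
`dd 2 1 = dy¹∧dx²`, `dd 3 1 = dy²∧dx²`, `dd 0 2 = dx¹∧dy¹`, `dd 0 3 = dx¹∧dy²`,
`dd 2 3 = dy¹∧dy²`. -/
noncomputable def dd (a b : Fin 4) : Module.Dual ℝ (⋀[ℝ]^2 (Fin 4 → ℝ)) :=
  extDual 2 ((Matrix.detRowAlternating : (Fin 2 → ℝ) [⋀^Fin 2]→ₗ[ℝ] ℝ).compLinearMap
    (LinearMap.pi ![(LinearMap.proj a : (Fin 4 → ℝ) →ₗ[ℝ] ℝ), LinearMap.proj b]))

/-- The vectors `u₁ = ∂x¹ + v¹₁∂y¹ + v²₁∂y²`, `u₂ = ∂x² + v¹₂∂y¹ + v²₂∂y²` associated with a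
`2×2` matrix `v` (where `v i μ = v^(i+1)_(μ+1)`). -/
noncomputable def ucol (v : Fin 2 → Fin 2 → ℝ) (μ : Fin 2) : Fin 4 → ℝ :=
  (Pi.single (Fin.castLE (by norm_num) μ) 1 : Fin 4 → ℝ) + v 0 μ • (Pi.single 2 1 : Fin 4 → ℝ) + v 1 μ • (Pi.single 3 1 : Fin 4 → ℝ)

/-- The Plücker chart `z(v) = u₁ ∧ u₂ ∈ ⋀²ℝ⁴`. -/
noncomputable def zmap (v : Fin 2 → Fin 2 → ℝ) : ⋀[ℝ]^2 (Fin 4 → ℝ) :=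
  wedge 2 (ucol v)

/-- The element of `(⋀²ℝ⁴)*` with coordinates `(e, p¹₁, p¹₂, p²₁, p²₂, r)`, namely
`e dx¹∧dx² + p¹₁ dy¹∧dx² + p¹₂ dy²∧dx² + p²₁ dx¹∧dy¹ + p²₂ dx¹∧dy² + r dy¹∧dy²`. -/
noncomputable def pform (e p11 p12 p21 p22 r : ℝ) : Module.Dual ℝ (⋀[ℝ]^2 (Fin 4 → ℝ)) :=
  e • dd 0 1 + p11 • dd 2 1 + p12 • dd 3 1 + p21 • dd 0 2 + p22 • dd 0 3 + r • dd 2 3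

lemma dd_wedge (a b : Fin 4) (w : Fin 2 → Fin 4 → ℝ) :
    dd a b (wedge 2 w) = w 0 a * w 1 b - w 1 a * w 0 b := by
  simp only [dd, extDual, wedge, LinearMap.comp_apply, Submodule.subtype_apply]
  rw [ExteriorAlgebra.liftAlternating_apply_ιMulti, Function.update_self]
  rw [AlternatingMap.compLinearMap_apply]
  rw [show (Matrix.detRowAlternating ((fun i => (LinearMap.pi ![(LinearMap.proj a : (Fin 4 → ℝ) →ₗ[ℝ] ℝ), LinearMap.proj b]) (w i)))) = Matrix.det (Matrix.of fun i => (LinearMap.pi ![(LinearMap.proj a : (Fin 4 → ℝ) →ₗ[ℝ] ℝ), LinearMap.proj b]) (w i)) from rfl]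
  rw [Matrix.det_fin_two]
  simp [LinearMap.pi_apply]; ring

lemma ucol_apply (v : Fin 2 → Fin 2 → ℝ) :
    (ucol v 0 0 = 1 ∧ ucol v 0 1 = 0 ∧ ucol v 0 2 = v 0 0 ∧ ucol v 0 3 = v 1 0) ∧
    (ucol v 1 0 = 0 ∧ ucol v 1 1 = 1 ∧ ucol v 1 2 = v 0 1 ∧ ucol v 1 3 = v 1 1) := by
  constructor <;> refine ⟨?_, ?_, ?_, ?_⟩ <;>
    norm_num [ucol, Pi.single_apply, Fin.castLE, Fin.ext_iff,
      show ((3:Fin 4):ℕ) = 3 from rfl, show ((2:Fin 4):ℕ) = 2 from rfl]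

lemma pform_zmap (e p11 p12 p21 p22 r : ℝ) (v : Fin 2 → Fin 2 → ℝ) :
    pform e p11 p12 p21 p22 r (zmap v) =
      e + p11 * v 0 0 + p12 * v 1 0 + p21 * v 0 1 + p22 * v 1 1
        + r * (v 0 0 * v 1 1 - v 0 1 * v 1 0) := by
  obtain ⟨⟨h1, h2, h3, h4⟩, ⟨h5, h6, h7, h8⟩⟩ := ucol_apply v
  simp only [pform, zmap, LinearMap.add_apply, LinearMap.smul_apply, dd_wedge,
    h1, h2, h3, h4, h5, h6, h7, h8, smul_eq_mul]
  ring

/-- Coordinate projection as a continuous linear map. -/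
noncomputable def cproj (i j : Fin 2) : (Fin 2 → Fin 2 → ℝ) →L[ℝ] ℝ :=
  (ContinuousLinearMap.proj (R := ℝ) (φ := fun _ : Fin 2 => ℝ) j).comp
    (ContinuousLinearMap.proj (R := ℝ) (φ := fun _ : Fin 2 => Fin 2 → ℝ) i)

lemma cproj_apply (i j : Fin 2) (w : Fin 2 → Fin 2 → ℝ) : cproj i j w = w i j := rfl

/-- The derivative of the reduced Lagrangian transform. -/
noncomputable def Dmap (s p11 p12 p21 p22 : ℝ) (v : Fin 2 → Fin 2 → ℝ) :
    (Fin 2 → Fin 2 → ℝ) →L[ℝ] ℝ :=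
  (p11 + s * v 1 1 - v 0 0) • cproj 0 0 + (p21 - s * v 1 0 - v 0 1) • cproj 0 1
    + (p12 - s * v 0 1 - v 1 0) • cproj 1 0 + (p22 + s * v 0 0 - v 1 1) • cproj 1 1

lemma hasFDerivAt_key (s e p11 p12 p21 p22 : ℝ) (v : Fin 2 → Fin 2 → ℝ) :
    HasFDerivAt (fun v : Fin 2 → Fin 2 → ℝ =>
      e + p11 * v 0 0 + p12 * v 1 0 + p21 * v 0 1 + p22 * v 1 1
        + s * (v 0 0 * v 1 1 - v 0 1 * v 1 0)
        - 1/2 * (v 0 0 * v 0 0 + v 0 1 * v 0 1 + v 1 0 * v 1 0 + v 1 1 * v 1 1))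
      (Dmap s p11 p12 p21 p22 v) v := by
  have h00 : HasFDerivAt (fun v : Fin 2 → Fin 2 → ℝ => v 0 0) (cproj 0 0) v := by
    have hc : (fun v : Fin 2 → Fin 2 → ℝ => v 0 0) = ⇑(cproj 0 0) := rfl
    rw [hc]; exact (cproj 0 0).hasFDerivAt
  have h01 : HasFDerivAt (fun v : Fin 2 → Fin 2 → ℝ => v 0 1) (cproj 0 1) v := by
    have hc : (fun v : Fin 2 → Fin 2 → ℝ => v 0 1) = ⇑(cproj 0 1) := rfl
    rw [hc]; exact (cproj 0 1).hasFDerivAt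
  have h10 : HasFDerivAt (fun v : Fin 2 → Fin 2 → ℝ => v 1 0) (cproj 1 0) v := by
    have hc : (fun v : Fin 2 → Fin 2 → ℝ => v 1 0) = ⇑(cproj 1 0) := rfl
    rw [hc]; exact (cproj 1 0).hasFDerivAt
  have h11 : HasFDerivAt (fun v : Fin 2 → Fin 2 → ℝ => v 1 1) (cproj 1 1) v := by
    have hc : (fun v : Fin 2 → Fin 2 → ℝ => v 1 1) = ⇑(cproj 1 1) := rfl
    rw [hc]; exact (cproj 1 1).hasFDerivAt
  have hquad := ((((h00.mul h00).add (h01.mul h01)).add (h10.mul h10)).add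
      (h11.mul h11)).const_mul (1/2)
  have hdet := ((h00.mul h11).sub (h01.mul h10)).const_mul s
  have hlin := ((((h00.const_mul p11).const_add e).add (h10.const_mul p12)).add
      (h01.const_mul p21)).add (h11.const_mul p22)
  have big := (hlin.add hdet).sub hquad
  refine big.congr_fderiv ?_
  refine ContinuousLinearMap.ext fun w => ?_
  simp only [Dmap, ContinuousLinearMap.add_apply, ContinuousLinearMap.sub_apply,
    ContinuousLinearMap.smul_apply, cproj_apply, smul_eq_mul]
  ring

/-- Example 5 of the paper, Dirichlet integral with a `B`-field: for
`(r − B)² ≠ 1` the map `v ↦ p(z(v)) − l(v)`, with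
`l(v) = |v|²/2 + B(v¹₁v²₂ − v¹₂v²₁)`, has exactly one critical point, with critical value
`e + (|p|²/2 + (r − B)(p¹₁p²₂ − p¹₂p²₁))/(1 − (r − B)²)`. -/
theorem statement16 (B : ℝ) (l : (Fin 2 → Fin 2 → ℝ) → ℝ)
    (hl : l = fun v => (1 / 2) * ((v 0 0) ^ 2 + (v 0 1) ^ 2 + (v 1 0) ^ 2 + (v 1 1) ^ 2)
      + B * (v 0 0 * v 1 1 - v 0 1 * v 1 0))
    (e p11 p12 p21 p22 r : ℝ) (hr : (r - B) ^ 2 ≠ 1) :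
    (∃! v : Fin 2 → Fin 2 → ℝ,
        fderiv ℝ (fun v : Fin 2 → Fin 2 → ℝ =>
          pform e p11 p12 p21 p22 r (zmap v) - l v) v = 0) ∧
      ∀ v : Fin 2 → Fin 2 → ℝ,
        fderiv ℝ (fun v : Fin 2 → Fin 2 → ℝ =>
            pform e p11 p12 p21 p22 r (zmap v) - l v) v = 0 →
          pform e p11 p12 p21 p22 r (zmap v) - l v =
            e + ((1 / 2) * (p11 ^ 2 + p12 ^ 2 + p21 ^ 2 + p22 ^ 2)
              + (r - B) * (p11 * p22 - p12 * p21)) / (1 - (r - B) ^ 2) := by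
  set s := r - B with hs
  have hk : 1 - s ^ 2 ≠ 0 := fun h => hr (by linarith)
  have hF : (fun v : Fin 2 → Fin 2 → ℝ =>
      pform e p11 p12 p21 p22 r (zmap v) - l v) = fun v : Fin 2 → Fin 2 → ℝ =>
      e + p11 * v 0 0 + p12 * v 1 0 + p21 * v 0 1 + p22 * v 1 1
        + s * (v 0 0 * v 1 1 - v 0 1 * v 1 0)
        - 1/2 * (v 0 0 * v 0 0 + v 0 1 * v 0 1 + v 1 0 * v 1 0 + v 1 1 * v 1 1) := by
    funext w
    rw [pform_zmap, hl]; ring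
  -- characterize criticality
  have hcrit : ∀ v : Fin 2 → Fin 2 → ℝ,
      fderiv ℝ (fun v : Fin 2 → Fin 2 → ℝ =>
        pform e p11 p12 p21 p22 r (zmap v) - l v) v = 0 ↔
      (p11 + s * v 1 1 - v 0 0 = 0 ∧ p21 - s * v 1 0 - v 0 1 = 0 ∧
       p12 - s * v 0 1 - v 1 0 = 0 ∧ p22 + s * v 0 0 - v 1 1 = 0) := by
    intro v
    rw [hF, (hasFDerivAt_key s e p11 p12 p21 p22 v).fderiv]
    constructor
    · intro h
      refine ⟨?_, ?_, ?_, ?_⟩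
      · have := congrFun (congrArg (fun (T : (Fin 2 → Fin 2 → ℝ) →L[ℝ] ℝ) => T.toFun) h)
          (Pi.single 0 (Pi.single 0 1))
        simpa [Dmap, cproj_apply, Pi.single_apply] using this
      · have := congrFun (congrArg (fun (T : (Fin 2 → Fin 2 → ℝ) →L[ℝ] ℝ) => T.toFun) h)
          (Pi.single 0 (Pi.single 1 1))
        simpa [Dmap, cproj_apply, Pi.single_apply] using this
      · have := congrFun (congrArg (fun (T : (Fin 2 → Fin 2 → ℝ) →L[ℝ] ℝ) => T.toFun) h)
          (Pi.single 1 (Pi.single 0 1))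
        simpa [Dmap, cproj_apply, Pi.single_apply] using this
      · have := congrFun (congrArg (fun (T : (Fin 2 → Fin 2 → ℝ) →L[ℝ] ℝ) => T.toFun) h)
          (Pi.single 1 (Pi.single 1 1))
        simpa [Dmap, cproj_apply, Pi.single_apply] using this
    · rintro ⟨h1, h2, h3, h4⟩
      refine ContinuousLinearMap.ext fun w => ?_
      simp [Dmap, h1, h2, h3, h4]
  -- the unique critical point
  set vstar : Fin 2 → Fin 2 → ℝ :=
    ![![(p11 + s * p22) / (1 - s ^ 2), (p21 - s * p12) / (1 - s ^ 2)],
      ![(p12 - s * p21) / (1 - s ^ 2), (p22 + s * p11) / (1 - s ^ 2)]] with hvstar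
  have hv00 : vstar 0 0 = (p11 + s * p22) / (1 - s ^ 2) := rfl
  have hv01 : vstar 0 1 = (p21 - s * p12) / (1 - s ^ 2) := rfl
  have hv10 : vstar 1 0 = (p12 - s * p21) / (1 - s ^ 2) := rfl
  have hv11 : vstar 1 1 = (p22 + s * p11) / (1 - s ^ 2) := rfl
  have hsolve : ∀ v : Fin 2 → Fin 2 → ℝ,
      (p11 + s * v 1 1 - v 0 0 = 0 ∧ p21 - s * v 1 0 - v 0 1 = 0 ∧
       p12 - s * v 0 1 - v 1 0 = 0 ∧ p22 + s * v 0 0 - v 1 1 = 0) → v = vstar := by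
    rintro v ⟨h1, h2, h3, h4⟩
    have e00 : v 0 0 = (p11 + s * p22) / (1 - s ^ 2) := by
      rw [eq_div_iff hk]; linear_combination (-1 : ℝ) * h1 - s * h4
    have e01 : v 0 1 = (p21 - s * p12) / (1 - s ^ 2) := by
      rw [eq_div_iff hk]; linear_combination (-1 : ℝ) * h2 + s * h3
    have e10 : v 1 0 = (p12 - s * p21) / (1 - s ^ 2) := by
      rw [eq_div_iff hk]; linear_combination (-1 : ℝ) * h3 + s * h2
    have e11 : v 1 1 = (p22 + s * p11) / (1 - s ^ 2) := by
      rw [eq_div_iff hk]; linear_combination (-1 : ℝ) * h4 - s * h1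
    funext i j
    fin_cases i <;> fin_cases j
    · exact show v 0 0 = vstar 0 0 by rw [e00, hv00]
    · exact show v 0 1 = vstar 0 1 by rw [e01, hv01]
    · exact show v 1 0 = vstar 1 0 by rw [e10, hv10]
    · exact show v 1 1 = vstar 1 1 by rw [e11, hv11]
  have hvcrit : p11 + s * vstar 1 1 - vstar 0 0 = 0 ∧ p21 - s * vstar 1 0 - vstar 0 1 = 0 ∧
      p12 - s * vstar 0 1 - vstar 1 0 = 0 ∧ p22 + s * vstar 0 0 - vstar 1 1 = 0 := by
    rw [hv00, hv01, hv10, hv11]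
    refine ⟨?_, ?_, ?_, ?_⟩ <;> (field_simp; ring)
  constructor
  · exact ⟨vstar, (hcrit vstar).mpr hvcrit, fun v hv => hsolve v ((hcrit v).mp hv)⟩
  · intro v hv
    obtain ⟨h1, h2, h3, h4⟩ := (hcrit v).mp hv
    have hveq := hsolve v ⟨h1, h2, h3, h4⟩
    rw [pform_zmap, hl, hveq]
    simp only [hv00, hv01, hv10, hv11]
    field_simp
    ring
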